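/- Let k be a commutative ring, X a set, and Ω a semigroup. The tridendriform family algebra DTF(X,Ω) is generated, under the operations {≺_ω, ≻_ω | ω ∈ Ω} and ·, by the set of single-vertex trees {stree(x) | x ∈ X}, where stree(x) = ∨²_{x;(1,1)}(|,|) is the tree with one internal binary vertex decorated by x. That is, the smallest k-submodule of DTF(X,Ω) containing all stree(x) and closed under all operations ≺_ω, ≻_ω (ω ∈ Ω) and · equals DTF(X,Ω). -/

import Mathlib

/-- An `X`-valently decorated `Ω`-typed Schröder tree with at least one internal vertex.
`node c₀ mid xₘ cₘ` is the grafting `∨^{m+1}_{x₁,…,xₘ;(α₀,…,αₘ)}(T⁽⁰⁾,…,T⁽ᵐ⁾)`: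
the root has children `c₀ = T⁽⁰⁾`, the children `T⁽¹⁾,…,T⁽ᵐ⁻¹⁾` listed in
`mid = [(x₁,T⁽¹⁾),…,(x_{m-1},T⁽ᵐ⁻¹⁾)]`, and the last child `cₘ = T⁽ᵐ⁾`; the root vertex
is decorated by `(x₁,…,xₘ) ∈ X^m`.  A child `none` is a leaf `|` (edge typed by the
adjoined identity `1 ∈ Ω¹`), a child `some (t, α)` is a nonempty subtree with internal
edge typed `α ∈ Ω`. -/
inductive SchT (X Ω : Type) : Type where
  | node : Option (SchT X Ω × Ω) → List (X × Option (SchT X Ω × Ω)) → X →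
      Option (SchT X Ω × Ω) → SchT X Ω

namespace SchT

variable {X Ω : Type}

/-- The single-vertex tree `stree x = ∨²_{x;(1,1)}(|,|)`. -/
def stree (x : X) : SchT X Ω := .node none [] x none

variable [Semigroup Ω] (k : Type) [CommRing k]

mutual
/-- `T ≺_ω U` on trees, with values in the free module on trees. -/
noncomputable def tprec : SchT X Ω → Ω → SchT X Ω → (SchT X Ω →₀ k)
  | .node c0 mid xm none, ω, U => Finsupp.single (.node c0 mid xm (some (U, ω))) 1
  | .node c0 mid xm (some (t, α)), ω, U =>
      Finsupp.mapDomain (fun s => SchT.node c0 mid xm (some (s, α * ω)))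
        (tsucc t α U + tprec t ω U + tdot t U)
  termination_by T _ U => sizeOf T + sizeOf U
  decreasing_by all_goals (simp_wf; omega)

/-- `T ≻_ω U` on trees, with values in the free module on trees. -/
noncomputable def tsucc : SchT X Ω → Ω → SchT X Ω → (SchT X Ω →₀ k)
  | T, ω, .node none mid yn dn => Finsupp.single (.node (some (T, ω)) mid yn dn) 1
  | T, ω, .node (some (u, β)) mid yn dn =>
      Finsupp.mapDomain (fun s => SchT.node (some (s, ω * β)) mid yn dn)
        (tsucc T ω u + tprec T β u + tdot T u)
  termination_by T _ U => sizeOf T + sizeOf U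
  decreasing_by all_goals (simp_wf; omega)

/-- `T · U` on trees, with values in the free module on trees. -/
noncomputable def tdot : SchT X Ω → SchT X Ω → (SchT X Ω →₀ k)
  | .node c0 mid xm none, .node none mid' yn dn =>
      Finsupp.single (.node c0 (mid ++ (xm, none) :: mid') yn dn) 1
  | .node c0 mid xm none, .node (some (u, β)) mid' yn dn =>
      Finsupp.single (.node c0 (mid ++ (xm, some (u, β)) :: mid') yn dn) 1
  | .node c0 mid xm (some (t, α)), .node none mid' yn dn =>
      Finsupp.single (.node c0 (mid ++ (xm, some (t, α)) :: mid') yn dn) 1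
  | .node c0 mid xm (some (t, α)), .node (some (u, β)) mid' yn dn =>
      Finsupp.mapDomain (fun s => SchT.node c0 (mid ++ (xm, some (s, α * β)) :: mid') yn dn)
        (tsucc t α u + tprec t β u + tdot t u)
  termination_by T U => sizeOf T + sizeOf U
  decreasing_by all_goals (simp_wf; omega)
end

/-- The bilinear extension of `≺_ω` to the free module `DTF(X,Ω) = SchT X Ω →₀ k`. -/
noncomputable def dprec (ω : Ω) (a b : SchT X Ω →₀ k) : SchT X Ω →₀ k :=
  a.sum fun T ca => b.sum fun U cb => (ca * cb) • tprec k T ω U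

/-- The bilinear extension of `≻_ω` to the free module `DTF(X,Ω) = SchT X Ω →₀ k`. -/
noncomputable def dsucc (ω : Ω) (a b : SchT X Ω →₀ k) : SchT X Ω →₀ k :=
  a.sum fun T ca => b.sum fun U cb => (ca * cb) • tsucc k T ω U

/-- The bilinear extension of `·` to the free module `DTF(X,Ω) = SchT X Ω →₀ k`. -/
noncomputable def dmul (a b : SchT X Ω →₀ k) : SchT X Ω →₀ k :=
  a.sum fun T ca => b.sum fun U cb => (ca * cb) • tdot k T U

end SchT

/-! Every tree is reached from smaller ones by a single operation: a nonempty leftmost subtree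
`t` (edge `α`) is split off by `t ≻_α -`, a root of arity at least three is the product of its
first binary corolla and the rest, and a binary root with nonempty right subtree `u` (edge `β`)
is `stree x ≺_β u`. In each case the recursive definitions produce the tree itself with
coefficient one, so induction on the size of the tree gives every basis vector. -/

namespace SchT

variable {X Ω : Type} [Semigroup Ω] (k : Type) [CommRing k]

lemma dprec_single_single (ω : Ω) (T U : SchT X Ω) :
    dprec k ω (Finsupp.single T 1) (Finsupp.single U 1) = tprec k T ω U := by
  simp [dprec]

lemma dsucc_single_single (ω : Ω) (T U : SchT X Ω) :
    dsucc k ω (Finsupp.single T 1) (Finsupp.single U 1) = tsucc k T ω U := by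
  simp [dsucc]

lemma dmul_single_single (T U : SchT X Ω) :
    dmul k (Finsupp.single T 1) (Finsupp.single U 1) = tdot k T U := by
  simp [dmul]

lemma tsucc_node_leaf (t : SchT X Ω) (α : Ω) (mid : List (X × Option (SchT X Ω × Ω))) (x : X)
    (cm : Option (SchT X Ω × Ω)) :
    tsucc k t α (.node none mid x cm) = Finsupp.single (.node (some (t, α)) mid x cm) 1 := by
  rw [tsucc]

lemma tdot_corolla_node_leaf (x₁ : X) (c₁ : Option (SchT X Ω × Ω))
    (mid : List (X × Option (SchT X Ω × Ω))) (x : X) (cm : Option (SchT X Ω × Ω)) :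
    tdot k (.node none [] x₁ c₁) (.node none mid x cm) =
      Finsupp.single (.node none ((x₁, c₁) :: mid) x cm) 1 := by
  rcases c₁ with _ | ⟨t, α⟩ <;> simp only [tdot, List.nil_append]

lemma tprec_stree (x : X) (β : Ω) (u : SchT X Ω) :
    tprec k (stree x) β u = Finsupp.single (.node none [] x (some (u, β))) 1 := by
  rw [stree, tprec]

theorem single_mem_of_closed (S : Set (SchT X Ω →₀ k))
    (hstree : ∀ x : X, Finsupp.single (stree x) 1 ∈ S)
    (hprec : ∀ (ω : Ω) (T U : SchT X Ω),
      Finsupp.single T 1 ∈ S → Finsupp.single U 1 ∈ S → tprec k T ω U ∈ S)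
    (hsucc : ∀ (ω : Ω) (T U : SchT X Ω),
      Finsupp.single T 1 ∈ S → Finsupp.single U 1 ∈ S → tsucc k T ω U ∈ S)
    (hdot : ∀ T U : SchT X Ω,
      Finsupp.single T 1 ∈ S → Finsupp.single U 1 ∈ S → tdot k T U ∈ S) :
    ∀ T : SchT X Ω, Finsupp.single T 1 ∈ S
  | .node (some (t, α)) mid x cm => by
    have ht := single_mem_of_closed S hstree hprec hsucc hdot t
    have hrest := single_mem_of_closed S hstree hprec hsucc hdot (.node none mid x cm)
    simpa only [tsucc_node_leaf] using hsucc α _ _ ht hrest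
  | .node none ((x₁, c₁) :: mid) x cm => by
    have hfirst := single_mem_of_closed S hstree hprec hsucc hdot (.node none [] x₁ c₁)
    have hrest := single_mem_of_closed S hstree hprec hsucc hdot (.node none mid x cm)
    simpa only [tdot_corolla_node_leaf] using hdot _ _ hfirst hrest
  | .node none [] x (some (u, β)) => by
    have hu := single_mem_of_closed S hstree hprec hsucc hdot u
    simpa only [tprec_stree] using hprec β _ _ (hstree x) hu
  | .node none [] x none => hstree x

end SchT

open SchT in
/-- The tridendriform family algebra `DTF(X,Ω)` is generated, under the
operations `{≺_ω, ≻_ω | ω ∈ Ω}` and `·`, by the single-vertex trees `stree x`, `x ∈ X`: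
every `k`-submodule containing all `stree x` and closed under all `≺_ω, ≻_ω` and `·` is
all of `DTF(X,Ω)`. -/
theorem DTF_generated_by_strees {X Ω : Type} [Semigroup Ω] (k : Type) [CommRing k] :
    ∀ S : Submodule k (SchT X Ω →₀ k),
      (∀ x : X, Finsupp.single (stree x) (1 : k) ∈ S) →
      (∀ (ω : Ω) (a b : SchT X Ω →₀ k), a ∈ S → b ∈ S → dprec k ω a b ∈ S) →
      (∀ (ω : Ω) (a b : SchT X Ω →₀ k), a ∈ S → b ∈ S → dsucc k ω a b ∈ S) →
      (∀ a b : SchT X Ω →₀ k, a ∈ S → b ∈ S → dmul k a b ∈ S) →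
      ∀ a : SchT X Ω →₀ k, a ∈ S := by
  intro S hstree hprec hsucc hdot
  have hbasis : ∀ T : SchT X Ω, Finsupp.single T (1 : k) ∈ S :=
    single_mem_of_closed k (S : Set (SchT X Ω →₀ k)) hstree
      (fun ω T U hT hU => by
        simpa only [dprec_single_single, SetLike.mem_coe] using hprec ω _ _ hT hU)
      (fun ω T U hT hU => by
        simpa only [dsucc_single_single, SetLike.mem_coe] using hsucc ω _ _ hT hU)
      (fun T U hT hU => by
        simpa only [dmul_single_single, SetLike.mem_coe] using hdot _ _ hT hU)
  have hspan :
      Submodule.span k (Set.range (Finsupp.basisSingleOne (R := k) (ι := SchT X Ω))) ≤ S :=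
    Submodule.span_le.2 (Set.range_subset_iff.2 fun T => by simpa using hbasis T)
  rw [Finsupp.basisSingleOne.span_eq] at hspan
  exact fun a => hspan Submodule.mem_top
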